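/- Let T > 0 and let V : ℝⁿ → ℝⁿ be Lipschitz continuous. Then for every p ∈ ℕ* there exists C₁ > 0 such that for all (θ,x) ∈ [0,T]×ℝⁿ, E[1 + ‖Ψ₄^V(G_θ,x)‖^{2p}] ≤ exp(C₁θ)(1 + ‖x‖^{2p}), where G_θ is a centered real Gaussian random variable with variance θ. -/

import Mathlib

/-!
Write `Ψ g = Ψ₄^V(g, x)`. The linear-growth and Lipschitz bounds on `V` pass through the four
stages and give `Ψ g = x + g • V x + O(g²)`, with constants polynomial in `|g|` and linear in
`1 + ‖x‖`. Expanding `s ↦ s ^ p` to second order at `‖x‖²`, the first-order terms of `‖Ψ g‖^(2p)`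
and `‖Ψ (-g)‖^(2p)` cancel, so their sum is at most `(2 + K g² (1 + |g|)^M) (1 + ‖x‖^(2p))`.
The centred Gaussian is symmetric, so integrating this bound gives the factor `1 + O(θ)`,
uniformly for `θ ∈ [0, T]`, since `E[G_θ² (1 + |G_θ|)^M] ≤ θ (1 + √T)^M E[Z² (1 + |Z|)^M]`;
and `1 + Cθ ≤ exp(Cθ)`.
-/

open MeasureTheory ProbabilityTheory

noncomputable section

/-- Euclidean space ℝⁿ. -/
abbrev Vec (n : ℕ) : Type := EuclideanSpace ℝ (Fin n)

/-- Classical fourth-order Runge–Kutta map `Ψ₄^V`. -/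
def rk4 {n : ℕ} (V : Vec n → Vec n) (θ : ℝ) (x : Vec n) : Vec n :=
  x + (θ / 6) • (V x + (2 : ℝ) • V (x + (θ / 2) • V x)
    + (2 : ℝ) • V (x + (θ / 2) • V (x + (θ / 2) • V x))
    + V (x + θ • V (x + (θ / 2) • V (x + (θ / 2) • V x))))

/- The remainder `R n := b ^ n - a ^ n - n a ^ (n - 1) (b - a)` satisfies
`R (n + 1) = b R n + n a ^ (n - 1) (b - a) ^ 2`. -/
theorem pow_le_pow_add_mul_sub_add_choose_two {a b M : ℝ} (ha : 0 ≤ a) (hb : 0 ≤ b)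
    (haM : a ≤ M) (hbM : b ≤ M) (n : ℕ) :
    b ^ n ≤ a ^ n + n * a ^ (n - 1) * (b - a) + n.choose 2 * (b - a) ^ 2 * M ^ (n - 2) := by
  induction n with
  | zero => simp
  | succ n ih =>
    rcases Nat.eq_zero_or_pos n with rfl | hn
    · simp
    have hcoef : (n.choose 2 : ℝ) * M ^ (n - 2) * M + n * M ^ (n - 1) =
        (n + 1).choose 2 * M ^ (n - 1) := by
      obtain _ | n := n
      · omega
      obtain _ | n := n
      · simp
      simp [Nat.choose_succ_succ, pow_succ]; ring
    have hR : b * (n.choose 2 * (b - a) ^ 2 * M ^ (n - 2)) ≤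
        M * (n.choose 2 * (b - a) ^ 2 * M ^ (n - 2)) :=
      mul_le_mul_of_nonneg_right hbM (by have := ha.trans haM; positivity)
    have ha' : n * a ^ (n - 1) * (b - a) ^ 2 ≤ n * M ^ (n - 1) * (b - a) ^ 2 := by gcongr
    calc b ^ (n + 1) = b * b ^ n := pow_succ' b n
      _ ≤ b * (a ^ n + n * a ^ (n - 1) * (b - a) + n.choose 2 * (b - a) ^ 2 * M ^ (n - 2)) := by
        gcongr
      _ = a ^ (n + 1) + (n + 1) * a ^ n * (b - a) + n * a ^ (n - 1) * (b - a) ^ 2 +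
          b * (n.choose 2 * (b - a) ^ 2 * M ^ (n - 2)) := by
        rw [pow_succ a n, ← pow_sub_one_mul hn.ne' a]; ring
      _ ≤ a ^ (n + 1) + (n + 1) * a ^ n * (b - a) +
          (b - a) ^ 2 * (n.choose 2 * M ^ (n - 2) * M + n * M ^ (n - 1)) := by linarith
      _ = _ := by rw [hcoef]; push_cast; ring

theorem pow_add_pow_le_two_mul_pow_add {a b b' M ε : ℝ} (ha : 0 ≤ a) (hb : 0 ≤ b) (hb' : 0 ≤ b')
    (haM : a ≤ M) (hbM : b ≤ M) (hb'M : b' ≤ M) (hε : 0 ≤ ε) (hd : (b - a) ^ 2 ≤ 4 * ε * M ^ 2)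
    (hd' : (b' - a) ^ 2 ≤ 4 * ε * M ^ 2) (hsum : (b - a) + (b' - a) ≤ 6 * ε * M) {p : ℕ}
    (hp : 1 ≤ p) :
    b ^ p + b' ^ p ≤ 2 * a ^ p + 10 * p ^ 2 * ε * M ^ p := by
  have hM : 0 ≤ M := ha.trans haM
  have hfirst : p * a ^ (p - 1) * ((b - a) + (b' - a)) ≤ 6 * p * ε * M ^ p := by
    calc _ ≤ p * a ^ (p - 1) * (6 * ε * M) := by gcongr
      _ ≤ p * M ^ (p - 1) * (6 * ε * M) := by gcongr
      _ = 6 * p * ε * M ^ p := by rw [← pow_sub_one_mul (by omega : p ≠ 0) M]; ring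
  have hsecond : (p.choose 2 : ℝ) * ((b - a) ^ 2 + (b' - a) ^ 2) * M ^ (p - 2) ≤
      4 * p ^ 2 * ε * M ^ p := by
    have hchoose : (p.choose 2 : ℝ) ≤ p ^ 2 / 2 := by
      simpa using Nat.choose_le_pow_div (α := ℝ) 2 p
    have hpow : (p.choose 2 : ℝ) * M ^ (p - 2) * M ^ 2 = p.choose 2 * M ^ p := by
      rcases lt_or_ge p 2 with hp2 | hp2
      · simp [Nat.choose_eq_zero_of_lt hp2]
      · rw [mul_assoc, pow_sub_mul_pow M hp2]
    calc _ ≤ (p.choose 2 : ℝ) * (8 * ε * M ^ 2) * M ^ (p - 2) := by gcongr; linarith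
      _ = 8 * ε * (p.choose 2 * M ^ p) := by rw [← hpow]; ring
      _ ≤ 8 * ε * (p ^ 2 / 2 * M ^ p) := by gcongr
      _ = 4 * p ^ 2 * ε * M ^ p := by ring
  have hp2 : (p : ℝ) ≤ p ^ 2 := by
    have : (1 : ℝ) ≤ p := by exact_mod_cast hp
    nlinarith
  have hεM : 0 ≤ ε * M ^ p := by positivity
  nlinarith [pow_le_pow_add_mul_sub_add_choose_two ha hb haM hbM p,
    pow_le_pow_add_mul_sub_add_choose_two ha hb' haM hb'M p]

theorem abs_norm_add_sq_sub_norm_sq_le {E : Type*} [NormedAddCommGroup E] [InnerProductSpace ℝ E]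
    {x k : E} {δ X : ℝ} (hδ : 0 ≤ δ) (hx : ‖x‖ ≤ X) (hk : ‖k‖ ≤ δ * X) :
    |‖x + k‖ ^ 2 - ‖x‖ ^ 2| ≤ 2 * δ * ((1 + δ) * X) ^ 2 := by
  have hX : 0 ≤ X := (norm_nonneg x).trans hx
  have hxk : |inner ℝ x k| ≤ X * (δ * X) :=
    (abs_real_inner_le_norm x k).trans (mul_le_mul hx hk (norm_nonneg k) hX)
  have hk2 : ‖k‖ ^ 2 ≤ (δ * X) ^ 2 := pow_le_pow_left₀ (norm_nonneg k) hk 2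
  rw [norm_add_sq_real, abs_le]
  constructor <;> nlinarith [abs_le.mp hxk, mul_nonneg hδ (sq_nonneg X),
    mul_nonneg (mul_nonneg hδ hδ) (sq_nonneg X), mul_nonneg (pow_nonneg hδ 3) (sq_nonneg X)]

theorem norm_add_pow_add_norm_add_pow_le {E : Type*} [NormedAddCommGroup E]
    [InnerProductSpace ℝ E] {x h h' : E} {δ X : ℝ} (hδ : 0 ≤ δ) (hx : ‖x‖ ≤ X)
    (hh : ‖h‖ ≤ δ * X) (hh' : ‖h'‖ ≤ δ * X) (hsum : ‖h + h'‖ ≤ 2 * δ ^ 2 * X) {p : ℕ}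
    (hp : 1 ≤ p) :
    ‖x + h‖ ^ (2 * p) + ‖x + h'‖ ^ (2 * p) ≤
      2 * ‖x‖ ^ (2 * p) + 10 * p ^ 2 * δ ^ 2 * ((1 + δ) * X) ^ (2 * p) := by
  have hX : 0 ≤ X := (norm_nonneg x).trans hx
  have hXM : X ^ 2 ≤ ((1 + δ) * X) ^ 2 := by gcongr; nlinarith
  have hM : ∀ k : E, ‖k‖ ≤ δ * X → ‖x + k‖ ^ 2 ≤ ((1 + δ) * X) ^ 2 := fun k hk => by
    gcongr; linarith [norm_add_le x k]
  have hd : ∀ k : E, ‖k‖ ≤ δ * X →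
      (‖x + k‖ ^ 2 - ‖x‖ ^ 2) ^ 2 ≤ 4 * δ ^ 2 * (((1 + δ) * X) ^ 2) ^ 2 := fun k hk => by
    rw [← sq_abs]
    nlinarith [abs_norm_add_sq_sub_norm_sq_le hδ hx hk, abs_nonneg (‖x + k‖ ^ 2 - ‖x‖ ^ 2)]
  have hlin : (‖x + h‖ ^ 2 - ‖x‖ ^ 2) + (‖x + h'‖ ^ 2 - ‖x‖ ^ 2) ≤
      6 * δ ^ 2 * ((1 + δ) * X) ^ 2 := by
    have hinner := (real_inner_le_norm x (h + h')).trans (mul_le_mul hx hsum (norm_nonneg _) hX)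
    rw [inner_add_right] at hinner
    rw [norm_add_sq_real, norm_add_sq_real]
    nlinarith [pow_le_pow_left₀ (norm_nonneg h) hh 2, pow_le_pow_left₀ (norm_nonneg h') hh' 2,
      mul_le_mul_of_nonneg_left hXM (sq_nonneg δ)]
  simp only [pow_mul]
  exact pow_add_pow_le_two_mul_pow_add (sq_nonneg _) (sq_nonneg _) (sq_nonneg _)
    (by simpa using hM 0 (by simp; positivity)) (hM h hh) (hM h' hh') (sq_nonneg δ)
    (hd h hh) (hd h' hh') hlin hp

theorem LipschitzWith.exists_linear_growth {E : Type*} [SeminormedAddCommGroup E] {V : E → E}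
    {L : NNReal} (hV : LipschitzWith L V) :
    ∃ c : ℝ, 1 ≤ c ∧ (∀ y, ‖V y‖ ≤ c * (1 + ‖y‖)) ∧ ∀ y z, ‖V y - V z‖ ≤ c * ‖y - z‖ := by
  have hVL : ∀ y z, ‖V y - V z‖ ≤ (‖V 0‖ + L + 1) * ‖y - z‖ := fun y z => by
    rw [← dist_eq_norm, ← dist_eq_norm]
    exact (hV.dist_le_mul y z).trans (by gcongr; linarith [norm_nonneg (V 0)])
  refine ⟨‖V 0‖ + L + 1, by linarith [norm_nonneg (V 0), L.coe_nonneg], fun y => ?_, hVL⟩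
  have := hVL y 0
  rw [sub_zero] at this
  nlinarith [norm_sub_norm_le (V y) (V 0), norm_nonneg y, norm_nonneg (V 0), L.coe_nonneg]

section Stage

variable {E : Type*} [NormedAddCommGroup E] [NormedSpace ℝ E] {V : E → E} {c : ℝ}

theorem norm_apply_add_smul_le (hc : 0 ≤ c) (hV : ∀ y, ‖V y‖ ≤ c * (1 + ‖y‖))
    (hVL : ∀ y z, ‖V y - V z‖ ≤ c * ‖y - z‖) {x k : E} {s g w b : ℝ} (hs : |s| ≤ |g|)
    (hw : c * (1 + |g|) ≤ w) (hb : 1 ≤ b) (hk : ‖k‖ ≤ b * (1 + ‖x‖)) :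
    ‖V (x + s • k)‖ ≤ w * b * (1 + ‖x‖) ∧ ‖V (x + s • k) - V x‖ ≤ |g| * (w * b) * (1 + ‖x‖) := by
  have hsk : ‖s • k‖ ≤ |g| * (b * (1 + ‖x‖)) := by
    rw [norm_smul, Real.norm_eq_abs]; gcongr
  constructor
  · calc ‖V (x + s • k)‖ ≤ c * (1 + (‖x‖ + ‖s • k‖)) := by
          grw [hV, norm_add_le]
      _ ≤ c * (1 + |g|) * (b * (1 + ‖x‖)) := by
          rw [mul_assoc]; gcongr c * ?_; nlinarith [norm_nonneg x]
      _ ≤ w * b * (1 + ‖x‖) := by rw [mul_assoc w]; gcongr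
  · calc ‖V (x + s • k) - V x‖ ≤ c * ‖s • k‖ := by simpa using hVL (x + s • k) x
      _ ≤ c * (|g| * (b * (1 + ‖x‖))) := by gcongr
      _ ≤ c * (1 + |g|) * (|g| * (b * (1 + ‖x‖))) := by
          gcongr; nlinarith [abs_nonneg g]
      _ ≤ w * (|g| * (b * (1 + ‖x‖))) := by gcongr
      _ = _ := by ring

theorem norm_rk4_increment_le {k₁ k₂ k₃ k₄ : E} {g B D : ℝ} (h₁ : ‖k₁‖ ≤ B) (h₂ : ‖k₂‖ ≤ B)
    (h₃ : ‖k₃‖ ≤ B) (h₄ : ‖k₄‖ ≤ B) (d₂ : ‖k₂ - k₁‖ ≤ D) (d₃ : ‖k₃ - k₁‖ ≤ D)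
    (d₄ : ‖k₄ - k₁‖ ≤ D) :
    ‖(g / 6) • (k₁ + (2 : ℝ) • k₂ + (2 : ℝ) • k₃ + k₄)‖ ≤ |g| * B ∧
      ‖(g / 6) • (k₁ + (2 : ℝ) • k₂ + (2 : ℝ) • k₃ + k₄) - g • k₁‖ ≤ |g| * D := by
  have hg : ‖g / 6‖ = |g| / 6 := by rw [Real.norm_eq_abs, abs_div]; norm_num
  have hD : 0 ≤ D := (norm_nonneg _).trans d₂
  constructor
  · have hS : ‖k₁ + (2 : ℝ) • k₂ + (2 : ℝ) • k₃ + k₄‖ ≤ 6 * B := by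
      grw [norm_add₄_le, norm_smul, norm_smul, h₁, h₂, h₃, h₄]
      norm_num; linarith
    rw [norm_smul, hg]
    calc |g| / 6 * ‖k₁ + (2 : ℝ) • k₂ + (2 : ℝ) • k₃ + k₄‖ ≤ |g| / 6 * (6 * B) := by gcongr
      _ = |g| * B := by ring
  · have hS : ‖(2 : ℝ) • (k₂ - k₁) + (2 : ℝ) • (k₃ - k₁) + (k₄ - k₁)‖ ≤ 6 * D := by
      grw [norm_add₃_le, norm_smul, norm_smul, d₂, d₃, d₄]
      norm_num; linarith
    have hid : (g / 6) • (k₁ + (2 : ℝ) • k₂ + (2 : ℝ) • k₃ + k₄) - g • k₁ =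
        (g / 6) • ((2 : ℝ) • (k₂ - k₁) + (2 : ℝ) • (k₃ - k₁) + (k₄ - k₁)) := by module
    rw [hid, norm_smul, hg]
    calc |g| / 6 * ‖(2 : ℝ) • (k₂ - k₁) + (2 : ℝ) • (k₃ - k₁) + (k₄ - k₁)‖
        ≤ |g| / 6 * (6 * D) := by gcongr
      _ = |g| * D := by ring

end Stage

theorem continuous_rk4 {n : ℕ} {V : Vec n → Vec n} (hV : Continuous V) (x : Vec n) :
    Continuous fun g => rk4 V g x := by
  unfold rk4; fun_prop

section RK4

variable {n : ℕ} {V : Vec n → Vec n} {c : ℝ}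

theorem norm_rk4_sub_le (hc : 1 ≤ c) (hV : ∀ y, ‖V y‖ ≤ c * (1 + ‖y‖))
    (hVL : ∀ y z, ‖V y - V z‖ ≤ c * ‖y - z‖) (g : ℝ) (x : Vec n) :
    ‖rk4 V g x - x‖ ≤ |g| * (c * (1 + |g|)) ^ 4 * (1 + ‖x‖) ∧
      ‖rk4 V g x - x - g • V x‖ ≤ g ^ 2 * (c * (1 + |g|)) ^ 4 * (1 + ‖x‖) := by
  generalize hw : c * (1 + |g|) = w
  have hw1 : 1 ≤ w := by nlinarith [abs_nonneg g]
  have hhalf : |g / 2| ≤ |g| := by rw [abs_div, abs_two]; linarith [abs_nonneg g]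
  have hk₁ : ‖V x‖ ≤ w * (1 + ‖x‖) := (hV x).trans (by gcongr; nlinarith [abs_nonneg g])
  obtain ⟨hk₂, hd₂⟩ := norm_apply_add_smul_le (by linarith) hV hVL hhalf hw.le hw1 hk₁
  obtain ⟨hk₃, hd₃⟩ :=
    norm_apply_add_smul_le (by linarith) hV hVL hhalf hw.le (by nlinarith) hk₂
  obtain ⟨hk₄, hd₄⟩ :=
    norm_apply_add_smul_le (by linarith) hV hVL le_rfl hw.le (by nlinarith) hk₃
  have h₁ : w ≤ w ^ 4 := le_self_pow₀ hw1 (by norm_num)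
  have h₂ : w * w ≤ w ^ 4 := by nlinarith
  have h₃ : w * (w * w) ≤ w ^ 4 := by nlinarith
  have h₄ : w * (w * (w * w)) = w ^ 4 := by ring
  obtain ⟨hinc, hrem⟩ := norm_rk4_increment_le (g := g) (B := w ^ 4 * (1 + ‖x‖))
    (D := |g| * w ^ 4 * (1 + ‖x‖)) (hk₁.trans (by gcongr)) (hk₂.trans (by gcongr))
    (hk₃.trans (by gcongr)) (hk₄.trans_eq (by rw [h₄])) (hd₂.trans (by gcongr))
    (hd₃.trans (by gcongr)) (hd₄.trans_eq (by rw [h₄]))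
  constructor
  · simpa only [rk4, add_sub_cancel_left, mul_assoc] using hinc
  · simpa only [rk4, add_sub_cancel_left, ← mul_assoc, ← sq, sq_abs] using hrem

theorem norm_rk4_pow_add_norm_rk4_neg_pow_le (hc : 1 ≤ c) (hV : ∀ y, ‖V y‖ ≤ c * (1 + ‖y‖))
    (hVL : ∀ y z, ‖V y - V z‖ ≤ c * ‖y - z‖) {p : ℕ} (hp : 1 ≤ p) (g : ℝ) (x : Vec n) :
    ‖rk4 V g x‖ ^ (2 * p) + ‖rk4 V (-g) x‖ ^ (2 * p) ≤ 2 * ‖x‖ ^ (2 * p) +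
      10 * p ^ 2 * (|g| * (c * (1 + |g|)) ^ 4) ^ 2 *
        ((1 + |g| * (c * (1 + |g|)) ^ 4) * (1 + ‖x‖)) ^ (2 * p) := by
  obtain ⟨hhp, hep⟩ := norm_rk4_sub_le hc hV hVL g x
  obtain ⟨hhm, hem⟩ := norm_rk4_sub_le hc hV hVL (-g) x
  rw [abs_neg, neg_sq, neg_smul, sub_neg_eq_add] at *
  have hw : 1 ≤ c * (1 + |g|) := by nlinarith [abs_nonneg g]
  generalize c * (1 + |g|) = w at *
  have hsum : ‖(rk4 V g x - x) + (rk4 V (-g) x - x)‖ ≤ 2 * (|g| * w ^ 4) ^ 2 * (1 + ‖x‖) := by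
    have hw48 : w ^ 4 ≤ (w ^ 4) ^ 2 := by nlinarith [one_le_pow₀ (n := 4) hw]
    calc ‖(rk4 V g x - x) + (rk4 V (-g) x - x)‖
        = ‖(rk4 V g x - x - g • V x) + (rk4 V (-g) x - x + g • V x)‖ := by
          congr 1; abel
      _ ≤ 2 * (g ^ 2 * w ^ 4 * (1 + ‖x‖)) := by
          grw [norm_add_le, hep, hem]; linarith
      _ ≤ 2 * (|g| * w ^ 4) ^ 2 * (1 + ‖x‖) := by
          rw [mul_pow, sq_abs]
          linarith [mul_le_mul_of_nonneg_right (mul_le_mul_of_nonneg_left hw48 (sq_nonneg g))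
            (by positivity : (0 : ℝ) ≤ 1 + ‖x‖)]
  simpa only [add_sub_cancel] using norm_add_pow_add_norm_add_pow_le (by positivity)
    (le_add_of_nonneg_left zero_le_one) hhp hhm hsum hp

theorem exists_rk4_symmetric_growth_bound (hc : 1 ≤ c) (hV : ∀ y, ‖V y‖ ≤ c * (1 + ‖y‖))
    (hVL : ∀ y z, ‖V y - V z‖ ≤ c * ‖y - z‖) {p : ℕ} (hp : 1 ≤ p) :
    ∃ K : ℝ, ∃ M : ℕ, 0 ≤ K ∧ ∀ g x, (1 + ‖rk4 V g x‖ ^ (2 * p)) + (1 + ‖rk4 V (-g) x‖ ^ (2 * p)) ≤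
      (2 + K * (g ^ 2 * (1 + |g|) ^ M)) * (1 + ‖x‖ ^ (2 * p)) := by
  refine ⟨10 * p ^ 2 * 2 ^ (4 * p) * c ^ (8 + 10 * p), 8 + 10 * p, by positivity, fun g x => ?_⟩
  have hsym := norm_rk4_pow_add_norm_rk4_neg_pow_le hc hV hVL hp g x
  have hcg : c ^ (8 + 10 * p) * (1 + |g|) ^ (8 + 10 * p) = (c * (1 + |g|)) ^ (8 + 10 * p) :=
    (mul_pow _ _ _).symm
  have hgw : |g| ≤ c * (1 + |g|) := by nlinarith [abs_nonneg g]
  have hw : 1 ≤ c * (1 + |g|) := by nlinarith [abs_nonneg g]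
  generalize c * (1 + |g|) = w at hsym hcg hgw hw
  have hX : (1 + ‖x‖) ^ (2 * p) ≤ 2 ^ (2 * p) * (1 + ‖x‖ ^ (2 * p)) := by
    grw [add_pow_le zero_le_one (norm_nonneg x), one_pow, Nat.sub_le]
    norm_num
  have hδ : 1 + |g| * w ^ 4 ≤ 2 * w ^ 5 := by
    nlinarith [mul_le_mul_of_nonneg_right hgw (by positivity : (0 : ℝ) ≤ w ^ 4),
      one_le_pow₀ (n := 5) hw]
  have hrem : (|g| * w ^ 4) ^ 2 * ((1 + |g| * w ^ 4) * (1 + ‖x‖)) ^ (2 * p) ≤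
      2 ^ (4 * p) * (g ^ 2 * w ^ (8 + 10 * p)) * (1 + ‖x‖ ^ (2 * p)) := by
    calc (|g| * w ^ 4) ^ 2 * ((1 + |g| * w ^ 4) * (1 + ‖x‖)) ^ (2 * p)
        = g ^ 2 * w ^ 8 * (1 + |g| * w ^ 4) ^ (2 * p) * (1 + ‖x‖) ^ (2 * p) := by
          rw [mul_pow, mul_pow, sq_abs]; ring
      _ ≤ g ^ 2 * w ^ 8 * (2 * w ^ 5) ^ (2 * p) * (2 ^ (2 * p) * (1 + ‖x‖ ^ (2 * p))) := by
          gcongr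
      _ = 2 ^ (4 * p) * (g ^ 2 * w ^ (8 + 10 * p)) * (1 + ‖x‖ ^ (2 * p)) := by ring
  calc (1 + ‖rk4 V g x‖ ^ (2 * p)) + (1 + ‖rk4 V (-g) x‖ ^ (2 * p))
      ≤ 2 + 2 * ‖x‖ ^ (2 * p) +
        10 * p ^ 2 * (2 ^ (4 * p) * (g ^ 2 * w ^ (8 + 10 * p)) * (1 + ‖x‖ ^ (2 * p))) := by
        grw [← hrem]; linarith
    _ = _ := by rw [← hcg]; ring

end RK4

instance isNegInvariant_gaussianReal_zero (v : NNReal) : (gaussianReal 0 v).IsNegInvariant :=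
  ⟨by simpa [Measure.neg_def] using gaussianReal_map_neg (μ := 0) (v := v)⟩

theorem integral_le_of_add_neg_le {μ : Measure ℝ} [μ.IsNegInvariant] {f b : ℝ → ℝ}
    (hf : AEStronglyMeasurable f μ) (hf0 : ∀ g, 0 ≤ f g) (hb : Integrable b μ)
    (hfb : ∀ g, f g + f (-g) ≤ 2 * b g) : ∫ g, f g ∂μ ≤ ∫ g, b g ∂μ := by
  have hfi : Integrable f μ := (hb.const_mul 2).mono' hf <| .of_forall fun g => by
    rw [Real.norm_of_nonneg (hf0 g)]; linarith [hfb g, hf0 (-g)]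
  have := integral_mono (f := fun g => f g + f (-g)) (hfi.add hfi.comp_neg) (hb.const_mul 2) hfb
  rw [integral_add hfi hfi.comp_neg, integral_neg_eq_self, integral_const_mul] at this
  linarith

theorem integrable_sq_mul_one_add_abs_pow_gaussianReal (μ : ℝ) (v : NNReal) (M : ℕ) :
    Integrable (fun g : ℝ => g ^ 2 * (1 + |g|) ^ M) (gaussianReal μ v) := by
  have hid : MemLp (id : ℝ → ℝ) (M + 2 : ℕ) (gaussianReal μ v) :=
    memLp_id_gaussianReal' _ (ENNReal.natCast_ne_top _)
  have h : MemLp (fun g : ℝ => 1 + |g|) (M + 2 : ℕ) (gaussianReal μ v) :=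
    (memLp_const (1 : ℝ)).add hid.norm
  refine (h.integrable_norm_pow (by omega)).mono' ?_ (.of_forall fun g => ?_)
  · exact (by fun_prop : Continuous fun g : ℝ => g ^ 2 * (1 + |g|) ^ M).aestronglyMeasurable
  have : |g| ≤ 1 + |g| := by linarith
  rw [Real.norm_of_nonneg (by positivity), Real.norm_of_nonneg (by positivity), pow_add, mul_comm,
    ← sq_abs]
  gcongr

theorem integral_sq_mul_one_add_abs_pow_gaussianReal_le {θ T : ℝ} (hθ : 0 ≤ θ) (hθT : θ ≤ T)
    (M : ℕ) :
    ∫ g, g ^ 2 * (1 + |g|) ^ M ∂gaussianReal 0 θ.toNNReal ≤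
      θ * ((1 + √T) ^ M * ∫ z, z ^ 2 * (1 + |z|) ^ M ∂gaussianReal 0 1) := by
  have hmap : (gaussianReal 0 1).map (√θ * ·) = gaussianReal 0 θ.toNNReal := by
    rw [gaussianReal_map_const_mul]
    congr 1
    · simp
    · ext; simp [Real.sq_sqrt hθ, hθ]
  have hint := integrable_sq_mul_one_add_abs_pow_gaussianReal 0 1 M
  rw [← hmap, integral_map (by fun_prop) (by fun_prop), ← integral_const_mul, ← integral_const_mul]
  refine integral_mono ?_ ((hint.const_mul _).const_mul _) fun z => ?_
  · have h := integrable_sq_mul_one_add_abs_pow_gaussianReal 0 θ.toNNReal M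
    rw [← hmap] at h
    exact (integrable_map_measure (by fun_prop) (by fun_prop)).mp h
  have h1 : 1 + |√θ * z| ≤ (1 + √T) * (1 + |z|) := by
    rw [abs_mul, abs_of_nonneg (Real.sqrt_nonneg θ)]
    nlinarith [Real.sqrt_le_sqrt hθT, Real.sqrt_nonneg θ, abs_nonneg z]
  calc (√θ * z) ^ 2 * (1 + |√θ * z|) ^ M ≤ θ * z ^ 2 * ((1 + √T) * (1 + |z|)) ^ M := by
        rw [mul_pow, Real.sq_sqrt hθ]; gcongr
    _ = _ := by rw [mul_pow]; ring

theorem exists_integral_gaussianReal_le_exp_mul (T K : ℝ) (hK : 0 ≤ K) (M : ℕ) :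
    ∃ C, 0 < C ∧ ∀ θ ∈ Set.Icc (0 : ℝ) T, ∀ (f : ℝ → ℝ) (a : ℝ), Continuous f →
      (∀ g, 0 ≤ f g) → (∀ g, f g + f (-g) ≤ (2 + K * (g ^ 2 * (1 + |g|) ^ M)) * a) →
      ∫ g, f g ∂gaussianReal 0 θ.toNNReal ≤ Real.exp (C * θ) * a := by
  set m := (1 + √T) ^ M * ∫ z, z ^ 2 * (1 + |z|) ^ M ∂gaussianReal 0 1
  have hm : 0 ≤ m := by positivity
  refine ⟨K / 2 * m + 1, by positivity, fun θ ⟨hθ, hθT⟩ f a hf hf0 hfa => ?_⟩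
  have ha : 0 ≤ a := by
    have h0 := hfa 0
    norm_num at h0
    linarith [hf0 0]
  have hint := integrable_sq_mul_one_add_abs_pow_gaussianReal 0 θ.toNNReal M
  calc ∫ g, f g ∂gaussianReal 0 θ.toNNReal
      ≤ ∫ g, (1 + K / 2 * (g ^ 2 * (1 + |g|) ^ M)) * a ∂gaussianReal 0 θ.toNNReal :=
        integral_le_of_add_neg_le hf.aestronglyMeasurable hf0
          (((integrable_const 1).add (hint.const_mul _)).mul_const a) fun g => by linarith [hfa g]
    _ = (1 + K / 2 * ∫ g, g ^ 2 * (1 + |g|) ^ M ∂gaussianReal 0 θ.toNNReal) * a := by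
        rw [integral_mul_const, integral_add (integrable_const 1) (hint.const_mul _),
          integral_const_mul]
        simp
    _ ≤ (1 + (K / 2 * m + 1) * θ) * a := by
        have hI := integral_sq_mul_one_add_abs_pow_gaussianReal_le hθ hθT M
        gcongr ?_ * a
        nlinarith [mul_le_mul_of_nonneg_left hI (by positivity : 0 ≤ K / 2)]
    _ ≤ Real.exp ((K / 2 * m + 1) * θ) * a := by
        gcongr; linarith [Real.add_one_le_exp ((K / 2 * m + 1) * θ)]

theorem rk4_gaussian_growth_general {n : ℕ} (T : ℝ) (V : Vec n → Vec n)
    (hLip : ∃ L : NNReal, LipschitzWith L V) :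
    ∀ p : ℕ, 1 ≤ p → ∃ C₁ : ℝ, 0 < C₁ ∧
      ∀ θ ∈ Set.Icc (0 : ℝ) T, ∀ x : Vec n,
        ∫ g : ℝ, (1 + ‖rk4 V g x‖ ^ (2 * p)) ∂(gaussianReal 0 (Real.toNNReal θ)) ≤
          Real.exp (C₁ * θ) * (1 + ‖x‖ ^ (2 * p)) := by
  obtain ⟨L, hL⟩ := hLip
  obtain ⟨c, hc, hV, hVL⟩ := hL.exists_linear_growth
  intro p hp
  obtain ⟨K, M, hK, hsym⟩ := exists_rk4_symmetric_growth_bound hc hV hVL hp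
  obtain ⟨C, hC, hint⟩ := exists_integral_gaussianReal_le_exp_mul T K hK M
  refine ⟨C, hC, fun θ hθ x => hint θ hθ _ _ ?_ (fun g => by positivity) (fun g => hsym g x)⟩
  exact continuous_const.add ((continuous_rk4 hL.continuous x).norm.pow _)

/-- moment-type growth bound for the fourth-order Runge–Kutta map
evaluated at a centered Gaussian time of variance `θ`. -/
theorem rk4_gaussian_growth {n : ℕ} (T : ℝ) (hT : 0 < T) (V : Vec n → Vec n)
    (hLip : ∃ L : NNReal, LipschitzWith L V) :
    ∀ p : ℕ, 1 ≤ p → ∃ C₁ : ℝ, 0 < C₁ ∧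
      ∀ θ ∈ Set.Icc (0 : ℝ) T, ∀ x : Vec n,
        ∫ g : ℝ, (1 + ‖rk4 V g x‖ ^ (2 * p)) ∂(gaussianReal 0 (Real.toNNReal θ)) ≤
          Real.exp (C₁ * θ) * (1 + ‖x‖ ^ (2 * p)) :=
  rk4_gaussian_growth_general T V hLip
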